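/- arXiv:0909.3009 — 5 statements merged into one kernel-verified Lean document; each statement's English description precedes it below -/
import Mathlib

section
/- Let f : Xⁿ → X be an order-preserving, R_f-idempotent function whose diagonal section δ_f is a lattice homomorphism with convex range. Then the following are equivalent: (i) f is a polynomial function; (ii) f is quasi-∧-homogeneous and quasi-∨-homogeneous; (iii) f is quasi-∧-homogeneous and horizontally ∨-decomposable; (iv) f is horizontally ∧-decomposable and quasi-∨-homogeneous. -/
open scoped Classical

/-- Lattice polynomial functions in `n` variables on a bounded distributive lattice. -/
inductive IsLatticePolynomial {L : Type*} [DistribLattice L] [BoundedOrder L] {n : ℕ} :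
    ((Fin n → L) → L) → Prop
  | proj (i : Fin n) : IsLatticePolynomial (fun x => x i)
  | const (c : L) : IsLatticePolynomial (fun _ => c)
  | inf {p q : (Fin n → L) → L} :
      IsLatticePolynomial p → IsLatticePolynomial q → IsLatticePolynomial (fun x => p x ⊓ q x)
  | sup {p q : (Fin n → L) → L} :
      IsLatticePolynomial p → IsLatticePolynomial q → IsLatticePolynomial (fun x => p x ⊔ q x)

/-- A subset `S` of a lattice is convex. -/
def IsConvexSet {X : Type*} [Lattice X] (S : Set X) : Prop :=
  ∀ a ∈ S, ∀ b ∈ S, ∀ c : X, a ≤ c → c ≤ b → c ∈ S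

section Props

variable {X Y : Type*} [DistribLattice X] [BoundedOrder X] [DistribLattice Y] [BoundedOrder Y]
  {n : ℕ}

/-- `f` is quasi-∧-homogeneous. -/
def QuasiInfHomogeneous (f : (Fin n → X) → Y) : Prop :=
  ∀ (x : Fin n → X) (c : X), f (fun i => x i ⊓ c) = f x ⊓ f (fun _ => c)

/-- `f` is quasi-∨-homogeneous. -/
def QuasiSupHomogeneous (f : (Fin n → X) → Y) : Prop :=
  ∀ (x : Fin n → X) (c : X), f (fun i => x i ⊔ c) = f x ⊔ f (fun _ => c)

/-- `f` is horizontally ∨-decomposable. -/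
noncomputable def HorizSupDecomposable (f : (Fin n → X) → Y) : Prop :=
  ∀ (x : Fin n → X) (c : X),
    f x = f (fun i => x i ⊓ c) ⊔ f (fun i => if x i ≤ c then ⊥ else x i)

/-- `f` is horizontally ∧-decomposable. -/
noncomputable def HorizInfDecomposable (f : (Fin n → X) → Y) : Prop :=
  ∀ (x : Fin n → X) (c : X),
    f x = f (fun i => x i ⊔ c) ⊓ f (fun i => if c ≤ x i then ⊤ else x i)

end Props

section AuxLemmas

set_option linter.unusedSectionVars false
set_option linter.unusedVariables false

variable {X : Type*} [DistribLattice X] [BoundedOrder X] {n : ℕ}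

private lemma cross_aux {P Q p0 q0 e c : X} (h1 : e ≤ Q) (h2 : e ≤ q0)
    (h3 : q0 ≤ e ⊔ c) (h4 : P ⊓ c ≤ p0) :
    P ⊓ q0 ≤ (P ⊓ Q) ⊔ (p0 ⊓ q0) := by
  calc P ⊓ q0 = (P ⊓ q0) ⊓ (e ⊔ c) := (inf_eq_left.mpr (le_trans inf_le_right h3)).symm
    _ = ((P ⊓ q0) ⊓ e) ⊔ ((P ⊓ q0) ⊓ c) := inf_sup_left _ _ _
    _ ≤ (P ⊓ Q) ⊔ (p0 ⊓ q0) := by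
        apply sup_le_sup
        · exact le_inf (le_trans inf_le_left inf_le_left) (le_trans inf_le_right h1)
        · exact le_inf (le_trans (inf_le_inf_right c (inf_le_left)) h4)
            (le_trans inf_le_left inf_le_right)

private lemma cross_aux2 {P Q p0 q0 e c : X} (h1 : e ≤ Q) (h2 : e ≤ q0)
    (h3 : q0 ≤ e ⊔ c) (h4 : P ⊓ c ≤ p0) :
    P ⊓ q0 ≤ (P ⊓ p0) ⊔ (Q ⊓ q0) := by
  calc P ⊓ q0 = (P ⊓ q0) ⊓ (e ⊔ c) := (inf_eq_left.mpr (le_trans inf_le_right h3)).symm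
    _ = ((P ⊓ q0) ⊓ e) ⊔ ((P ⊓ q0) ⊓ c) := inf_sup_left _ _ _
    _ ≤ (Q ⊓ q0) ⊔ (P ⊓ p0) := by
        apply sup_le_sup
        · exact le_inf (le_trans inf_le_right h1) (le_trans inf_le_left inf_le_right)
        · exact le_inf (le_trans inf_le_left inf_le_left)
            (le_trans (inf_le_inf_right c (inf_le_left)) h4)
    _ = (P ⊓ p0) ⊔ (Q ⊓ q0) := sup_comm _ _

private lemma poly_goodP {f : (Fin n → X) → X} (hf : IsLatticePolynomial f) :
    QuasiInfHomogeneous f ∧ QuasiSupHomogeneous f ∧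
      (∀ (x : Fin n → X) (c : X), f x ⊓ c ≤ f (fun _ => c)) ∧
      (∀ x : Fin n → X, f (fun _ => (⊥ : X)) ≤ f x) ∧
      (∀ c : X, f (fun _ => c) ≤ f (fun _ => (⊥ : X)) ⊔ c) := by
  induction hf with
  | proj i =>
      exact ⟨fun x c => rfl, fun x c => rfl, fun x c => inf_le_right,
        fun x => bot_le, fun c => le_sup_right⟩
  | const e =>
      exact ⟨fun x c => (inf_idem e).symm, fun x c => (sup_idem e).symm,
        fun x c => inf_le_left, fun x => le_rfl, fun c => le_sup_left⟩
  | @inf p q hp hq ihp ihq =>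
      obtain ⟨p1, p2, p3, p5, p7⟩ := ihp
      obtain ⟨q1, q2, q3, q5, q7⟩ := ihq
      refine ⟨?_, ?_, ?_, ?_, ?_⟩
      · intro x c
        simp only [p1 x c, q1 x c]
        exact inf_inf_inf_comm _ _ _ _
      · intro x c
        simp only [p2 x c, q2 x c]
        apply le_antisymm
        · calc (p x ⊔ p (fun _ => c)) ⊓ (q x ⊔ q (fun _ => c))
              = ((p x) ⊓ (q x ⊔ q (fun _ => c))) ⊔ ((p (fun _ => c)) ⊓ (q x ⊔ q (fun _ => c))) :=
                inf_sup_right _ _ _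
            _ = ((p x ⊓ q x) ⊔ (p x ⊓ q (fun _ => c))) ⊔
                ((p (fun _ => c) ⊓ q x) ⊔ (p (fun _ => c) ⊓ q (fun _ => c))) := by
                rw [inf_sup_left, inf_sup_left]
            _ ≤ (p x ⊓ q x) ⊔ (p (fun _ => c) ⊓ q (fun _ => c)) := by
                apply sup_le (sup_le le_sup_left ?_) (sup_le ?_ le_sup_right)
                · exact cross_aux (q5 x) (q5 (fun _ => c)) (q7 c) (p3 x c)
                · calc p (fun _ => c) ⊓ q x = q x ⊓ p (fun _ => c) := inf_comm _ _
                    _ ≤ (q x ⊓ p x) ⊔ (q (fun _ => c) ⊓ p (fun _ => c)) :=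
                      cross_aux (p5 x) (p5 (fun _ => c)) (p7 c) (q3 x c)
                    _ = (p x ⊓ q x) ⊔ (p (fun _ => c) ⊓ q (fun _ => c)) := by
                      rw [inf_comm (q x) (p x), inf_comm (q (fun _ => c)) (p (fun _ => c))]
        · apply sup_le
          · exact le_inf (le_trans inf_le_left le_sup_left) (le_trans inf_le_right le_sup_left)
          · exact le_inf (le_trans inf_le_left le_sup_right) (le_trans inf_le_right le_sup_right)
      · intro x c
        exact le_inf (le_trans (inf_le_inf_right c inf_le_left) (p3 x c))
          (le_trans (inf_le_inf_right c inf_le_right) (q3 x c))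
      · intro x
        exact inf_le_inf (p5 x) (q5 x)
      · intro c
        calc p (fun _ => c) ⊓ q (fun _ => c)
            ≤ (p (fun _ => (⊥:X)) ⊔ c) ⊓ (q (fun _ => (⊥:X)) ⊔ c) := inf_le_inf (p7 c) (q7 c)
          _ = (p (fun _ => (⊥:X)) ⊓ q (fun _ => (⊥:X))) ⊔ c := (sup_inf_right _ _ _).symm
  | @sup p q hp hq ihp ihq =>
      obtain ⟨p1, p2, p3, p5, p7⟩ := ihp
      obtain ⟨q1, q2, q3, q5, q7⟩ := ihq
      refine ⟨?_, ?_, ?_, ?_, ?_⟩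
      · intro x c
        simp only [p1 x c, q1 x c]
        apply le_antisymm
        · apply sup_le
          · exact le_inf (le_trans inf_le_left le_sup_left) (le_trans inf_le_right le_sup_left)
          · exact le_inf (le_trans inf_le_left le_sup_right) (le_trans inf_le_right le_sup_right)
        · calc (p x ⊔ q x) ⊓ (p (fun _ => c) ⊔ q (fun _ => c))
              = ((p x) ⊓ (p (fun _ => c) ⊔ q (fun _ => c))) ⊔
                ((q x) ⊓ (p (fun _ => c) ⊔ q (fun _ => c))) := inf_sup_right _ _ _
            _ = ((p x ⊓ p (fun _ => c)) ⊔ (p x ⊓ q (fun _ => c))) ⊔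
                ((q x ⊓ p (fun _ => c)) ⊔ (q x ⊓ q (fun _ => c))) := by
                rw [inf_sup_left, inf_sup_left]
            _ ≤ (p x ⊓ p (fun _ => c)) ⊔ (q x ⊓ q (fun _ => c)) := by
                apply sup_le (sup_le le_sup_left ?_) (sup_le ?_ le_sup_right)
                · exact cross_aux2 (q5 x) (q5 (fun _ => c)) (q7 c) (p3 x c)
                · calc q x ⊓ p (fun _ => c)
                      ≤ (q x ⊓ q (fun _ => c)) ⊔ (p x ⊓ p (fun _ => c)) :=
                        cross_aux2 (p5 x) (p5 (fun _ => c)) (p7 c) (q3 x c)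
                    _ = (p x ⊓ p (fun _ => c)) ⊔ (q x ⊓ q (fun _ => c)) := sup_comm _ _
      · intro x c
        simp only [p2 x c, q2 x c]
        exact sup_sup_sup_comm _ _ _ _
      · intro x c
        calc (p x ⊔ q x) ⊓ c = (p x ⊓ c) ⊔ (q x ⊓ c) := inf_sup_right _ _ _
          _ ≤ p (fun _ => c) ⊔ q (fun _ => c) := sup_le_sup (p3 x c) (q3 x c)
      · intro x
        exact sup_le_sup (p5 x) (q5 x)
      · intro c
        apply sup_le
        · exact le_trans (p7 c) (sup_le_sup_right le_sup_left c)
        · exact le_trans (q7 c) (sup_le_sup_right le_sup_right c)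

private lemma horizSup_of_quasi {f : (Fin n → X) → X} (hmono : Monotone f)
    (hqi : QuasiInfHomogeneous f) (hqs : QuasiSupHomogeneous f) :
    HorizSupDecomposable f := by
  intro x c
  set z : Fin n → X := fun i => if x i ≤ c then ⊥ else x i with hz
  have hzx : z ≤ x := by
    intro i; by_cases h : x i ≤ c <;> simp [hz, h]
  have hxz : x ≤ fun i => z i ⊔ c := by
    intro i; by_cases h : x i ≤ c <;> simp [hz, h]
  have h1 : f x ≤ f z ⊔ f (fun _ => c) := by
    have := hmono hxz
    rwa [hqs z c] at this
  calc f x = f x ⊓ (f z ⊔ f (fun _ => c)) := (inf_eq_left.mpr h1).symm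
    _ = (f x ⊓ f z) ⊔ (f x ⊓ f (fun _ => c)) := inf_sup_left _ _ _
    _ = f (fun i => x i ⊓ c) ⊔ f z := by
        rw [inf_eq_right.mpr (hmono hzx), hqi x c, sup_comm]
    _ = f (fun i => x i ⊓ c) ⊔ f (fun i => if x i ≤ c then ⊥ else x i) := rfl

private lemma horizInf_of_quasi {f : (Fin n → X) → X} (hmono : Monotone f)
    (hqi : QuasiInfHomogeneous f) (hqs : QuasiSupHomogeneous f) :
    HorizInfDecomposable f := by
  intro x c
  set z : Fin n → X := fun i => if c ≤ x i then ⊤ else x i with hz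
  have hzx : x ≤ z := by
    intro i; by_cases h : c ≤ x i <;> simp [hz, h]
  have hxz : (fun i => z i ⊓ c) ≤ x := by
    intro i; by_cases h : c ≤ x i <;> simp [hz, h]
  have h1 : f z ⊓ f (fun _ => c) ≤ f x := by
    have := hmono hxz
    rwa [hqi z c] at this
  calc f x = f x ⊔ (f z ⊓ f (fun _ => c)) := (sup_eq_left.mpr h1).symm
    _ = (f x ⊔ f z) ⊓ (f x ⊔ f (fun _ => c)) := sup_inf_left _ _ _
    _ = f (fun i => x i ⊔ c) ⊓ f z := by
        rw [sup_eq_right.mpr (hmono hzx), hqs x c, inf_comm]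
    _ = f (fun i => x i ⊔ c) ⊓ f (fun i => if c ≤ x i then ⊤ else x i) := rfl

private lemma med_of_qi_hs {f : (Fin n → X) → X} (hmono : Monotone f)
    (hqi : QuasiInfHomogeneous f) (hhs : HorizSupDecomposable f) (x : Fin n → X) (k : Fin n) :
    f x = f (Function.update x k ⊥) ⊔ (f (fun _ => x k) ⊓ f (Function.update x k ⊤)) := by
  have hu : Function.update x k ⊥ ≤ x := by
    intro i; rw [Function.update_apply]; split
    · exact bot_le
    · exact le_rfl
  have hw : x ≤ Function.update x k ⊤ := by
    intro i; rw [Function.update_apply]; split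
    · exact le_top
    · exact le_rfl
  have huw : f (Function.update x k ⊥) ≤ f (Function.update x k ⊤) :=
    hmono (le_trans hu hw)
  have hdw : f (fun _ => x k) ⊓ f (Function.update x k ⊤) ≤ f x := by
    have hle : (fun i => Function.update x k ⊤ i ⊓ x k) ≤ x := by
      intro i
      show Function.update x k ⊤ i ⊓ x k ≤ x i
      rw [Function.update_apply]; split
      · rename_i h; subst h; simp
      · exact inf_le_left
    have := hmono hle
    rw [hqi (Function.update x k ⊤) (x k)] at this
    exact le_trans (le_of_eq (inf_comm _ _)) this
  have hupper : f x ≤ f (Function.update x k ⊥) ⊔ f (fun _ => x k) := by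
    have hdec := hhs x (x k)
    have h1 : f (fun i => x i ⊓ x k) ≤ f (fun _ => x k) := by
      rw [hqi x (x k)]; exact inf_le_right
    have h2 : f (fun i => if x i ≤ x k then ⊥ else x i) ≤ f (Function.update x k ⊥) := by
      apply hmono
      intro i; rw [Function.update_apply]; split
      · rename_i h; subst h; simp
      · by_cases h : x i ≤ x k <;> simp [h]
    calc f x = f (fun i => x i ⊓ x k) ⊔ f (fun i => if x i ≤ x k then ⊥ else x i) := hdec
      _ ≤ f (fun _ => x k) ⊔ f (Function.update x k ⊥) := sup_le_sup h1 h2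
      _ = f (Function.update x k ⊥) ⊔ f (fun _ => x k) := sup_comm _ _
  apply le_antisymm
  · calc f x ≤ (f (Function.update x k ⊥) ⊔ f (fun _ => x k)) ⊓ f (Function.update x k ⊤) :=
        le_inf hupper (hmono hw)
      _ = (f (Function.update x k ⊥) ⊓ f (Function.update x k ⊤)) ⊔
          (f (fun _ => x k) ⊓ f (Function.update x k ⊤)) := inf_sup_right _ _ _
      _ = f (Function.update x k ⊥) ⊔ (f (fun _ => x k) ⊓ f (Function.update x k ⊤)) := by
        rw [inf_eq_left.mpr huw]
  · exact sup_le (hmono hu) hdw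

private lemma med_of_hi_qs {f : (Fin n → X) → X} (hmono : Monotone f)
    (hhi : HorizInfDecomposable f) (hqs : QuasiSupHomogeneous f) (x : Fin n → X) (k : Fin n) :
    f x = f (Function.update x k ⊥) ⊔ (f (fun _ => x k) ⊓ f (Function.update x k ⊤)) := by
  have hu : Function.update x k ⊥ ≤ x := by
    intro i; rw [Function.update_apply]; split
    · exact bot_le
    · exact le_rfl
  have hw : x ≤ Function.update x k ⊤ := by
    intro i; rw [Function.update_apply]; split
    · exact le_top
    · exact le_rfl
  have huw : f (Function.update x k ⊥) ≤ f (Function.update x k ⊤) :=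
    hmono (le_trans hu hw)
  have hupper : f x ≤ f (Function.update x k ⊥) ⊔ f (fun _ => x k) := by
    have hle : x ≤ (fun i => Function.update x k ⊥ i ⊔ x k) := by
      intro i
      show x i ≤ Function.update x k ⊥ i ⊔ x k
      rw [Function.update_apply]; split
      · rename_i h; subst h; simp
      · exact le_sup_left
    have := hmono hle
    rwa [hqs (Function.update x k ⊥) (x k)] at this
  have hdw : f (fun _ => x k) ⊓ f (Function.update x k ⊤) ≤ f x := by
    have hdec := hhi x (x k)
    have h1 : f (fun _ => x k) ≤ f (fun i => x i ⊔ x k) := by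
      rw [hqs x (x k)]; exact le_sup_right
    have h2 : f (Function.update x k ⊤) ≤ f (fun i => if x k ≤ x i then ⊤ else x i) := by
      apply hmono
      intro i; rw [Function.update_apply]; split
      · rename_i h; subst h; simp
      · by_cases h : x k ≤ x i <;> simp [h]
    calc f (fun _ => x k) ⊓ f (Function.update x k ⊤)
        ≤ f (fun i => x i ⊔ x k) ⊓ f (fun i => if x k ≤ x i then ⊤ else x i) := inf_le_inf h1 h2
      _ = f x := hdec.symm
  apply le_antisymm
  · calc f x ≤ (f (Function.update x k ⊥) ⊔ f (fun _ => x k)) ⊓ f (Function.update x k ⊤) :=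
        le_inf hupper (hmono hw)
      _ = (f (Function.update x k ⊥) ⊓ f (Function.update x k ⊤)) ⊔
          (f (fun _ => x k) ⊓ f (Function.update x k ⊤)) := inf_sup_right _ _ _
      _ = f (Function.update x k ⊥) ⊔ (f (fun _ => x k) ⊓ f (Function.update x k ⊤)) := by
        rw [inf_eq_left.mpr huw]
  · exact sup_le (hmono hu) hdw

private def pat (T S : Finset (Fin n)) (x : Fin n → X) : Fin n → X :=
  fun i => if i ∈ T then (if i ∈ S then ⊤ else ⊥) else x i

private lemma goodstein_aux {f : (Fin n → X) → X}
    (hmed : ∀ (x : Fin n → X) (k : Fin n),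
      f x = f (Function.update x k ⊥) ⊔ (f (fun _ => x k) ⊓ f (Function.update x k ⊤)))
    (T : Finset (Fin n)) :
    ∀ x : Fin n → X,
      f x = T.powerset.sup (fun S => f (pat T S x) ⊓ S.inf (fun i => f (fun _ => x i))) := by
  induction T using Finset.induction_on with
  | empty =>
      intro x
      have hp : pat (∅ : Finset (Fin n)) ∅ x = x := by
        funext i; simp [pat]
      rw [Finset.powerset_empty, Finset.sup_singleton, Finset.inf_empty, inf_top_eq, hp]
  | @insert k T hk ih =>
      intro x
      have hpatbot : ∀ S ∈ T.powerset, pat (insert k T) S x = pat T S (Function.update x k ⊥) := by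
        intro S hS
        have hkS : k ∉ S := fun h => hk (Finset.mem_powerset.mp hS h)
        funext i
        by_cases hik : i = k
        · subst hik
          simp [pat, hk, hkS]
        · simp [pat, Finset.mem_insert, hik, Function.update_apply]
      have hpattop : ∀ S ∈ T.powerset,
          pat (insert k T) (insert k S) x = pat T S (Function.update x k ⊤) := by
        intro S hS
        funext i
        by_cases hik : i = k
        · subst hik
          simp [pat, hk]
        · simp [pat, Finset.mem_insert, hik, Function.update_apply]
      have A : f (Function.update x k ⊥) =
          T.powerset.sup (fun S => f (pat (insert k T) S x) ⊓ S.inf (fun i => f (fun _ => x i))) := by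
        rw [ih (Function.update x k ⊥)]
        apply Finset.sup_congr rfl
        intro S hS
        have hkS : k ∉ S := fun h => hk (Finset.mem_powerset.mp hS h)
        rw [hpatbot S hS]
        congr 1
        apply Finset.inf_congr rfl
        intro i hi
        have hik : i ≠ k := fun h => hkS (h ▸ hi)
        rw [Function.update_apply, if_neg hik]
      have B : f (fun _ => x k) ⊓ f (Function.update x k ⊤) =
          T.powerset.sup (fun S => f (pat (insert k T) (insert k S) x) ⊓
            (insert k S).inf (fun i => f (fun _ => x i))) := by
        rw [ih (Function.update x k ⊤), Finset.sup_inf_distrib_left]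
        apply Finset.sup_congr rfl
        intro S hS
        have hkS : k ∉ S := fun h => hk (Finset.mem_powerset.mp hS h)
        rw [hpattop S hS, Finset.inf_insert]
        have hinf : S.inf (fun i => f (fun _ => Function.update x k ⊤ i)) =
            S.inf (fun i => f (fun _ => x i)) := by
          apply Finset.inf_congr rfl
          intro i hi
          have hik : i ≠ k := fun h => hkS (h ▸ hi)
          rw [Function.update_apply, if_neg hik]
        rw [hinf]
        rw [inf_left_comm]
      calc f x = f (Function.update x k ⊥) ⊔ (f (fun _ => x k) ⊓ f (Function.update x k ⊤)) :=
            hmed x k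
        _ = T.powerset.sup (fun S => f (pat (insert k T) S x) ⊓ S.inf (fun i => f (fun _ => x i)))
            ⊔ T.powerset.sup (fun S => f (pat (insert k T) (insert k S) x) ⊓
              (insert k S).inf (fun i => f (fun _ => x i))) := by rw [A, B]
        _ = (insert k T).powerset.sup
              (fun S => f (pat (insert k T) S x) ⊓ S.inf (fun i => f (fun _ => x i))) := by
            rw [Finset.powerset_insert, Finset.sup_union, Finset.sup_image]
            rfl

private lemma poly_congr {f g : (Fin n → X) → X} (h : ∀ x, f x = g x)
    (hg : IsLatticePolynomial g) : IsLatticePolynomial f := by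
  have : f = g := funext h
  rw [this]; exact hg

private lemma poly_finset_sup {ι : Type*} [DecidableEq ι] (s : Finset ι)
    (g : ι → (Fin n → X) → X) (h : ∀ i ∈ s, IsLatticePolynomial (g i)) :
    IsLatticePolynomial (fun x => s.sup (fun i => g i x)) := by
  induction s using Finset.induction_on with
  | empty => exact poly_congr (fun x => by simp) (IsLatticePolynomial.const ⊥)
  | @insert a s ha ih =>
      exact poly_congr (fun x => by rw [Finset.sup_insert])
        (IsLatticePolynomial.sup (h a (Finset.mem_insert_self a s))
          (ih (fun i hi => h i (Finset.mem_insert_of_mem hi))))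

private lemma poly_finset_inf {ι : Type*} [DecidableEq ι] (s : Finset ι)
    (g : ι → (Fin n → X) → X) (h : ∀ i ∈ s, IsLatticePolynomial (g i)) :
    IsLatticePolynomial (fun x => s.inf (fun i => g i x)) := by
  induction s using Finset.induction_on with
  | empty => exact poly_congr (fun x => by simp) (IsLatticePolynomial.const ⊤)
  | @insert a s ha ih =>
      exact poly_congr (fun x => by rw [Finset.inf_insert])
        (IsLatticePolynomial.inf (h a (Finset.mem_insert_self a s))
          (ih (fun i hi => h i (Finset.mem_insert_of_mem hi))))

end AuxLemmas

theorem statement_10 {X : Type*} [DistribLattice X] [BoundedOrder X] {n : ℕ} (hn : 0 < n)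
    (f : (Fin n → X) → X) (hmono : Monotone f)
    (hidem : ∀ c ∈ Set.range f, f (fun _ => c) = c)
    (hhom : ∀ a b : X, f (fun _ => a ⊓ b) = f (fun _ => a) ⊓ f (fun _ => b) ∧
                       f (fun _ => a ⊔ b) = f (fun _ => a) ⊔ f (fun _ => b))
    (hconv : IsConvexSet (Set.range (fun x : X => f (fun _ => x)))) :
    (IsLatticePolynomial f ↔ QuasiInfHomogeneous f ∧ QuasiSupHomogeneous f) ∧
    (IsLatticePolynomial f ↔ QuasiInfHomogeneous f ∧ HorizSupDecomposable f) ∧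
    (IsLatticePolynomial f ↔ HorizInfDecomposable f ∧ QuasiSupHomogeneous f) := by
  classical
  have hd_idem : ∀ c : X, f (fun _ => f (fun _ => c)) = f (fun _ => c) :=
    fun c => hidem _ ⟨_, rfl⟩
  have hab : f (fun _ => (⊥ : X)) ≤ f (fun _ => (⊤ : X)) := hmono (fun _ => le_top)
  have haff : ∀ c : X, f (fun _ => c) = f (fun _ => (⊥ : X)) ⊔ (c ⊓ f (fun _ => (⊤ : X))) := by
    intro c
    have h1 : f (fun _ => (⊥:X)) ≤ f (fun _ => (⊥:X)) ⊔ (c ⊓ f (fun _ => (⊤:X))) := le_sup_left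
    have h2 : f (fun _ => (⊥:X)) ⊔ (c ⊓ f (fun _ => (⊤:X))) ≤ f (fun _ => (⊤:X)) :=
      sup_le hab inf_le_right
    obtain ⟨t, ht⟩ := hconv _ ⟨⊥, rfl⟩ _ ⟨⊤, rfl⟩ _ h1 h2
    have ht' : f (fun _ => t) = f (fun _ => (⊥:X)) ⊔ (c ⊓ f (fun _ => (⊤:X))) := ht
    have hm : f (fun _ => (f (fun _ => (⊥:X)) ⊔ (c ⊓ f (fun _ => (⊤:X))))) =
        f (fun _ => (⊥:X)) ⊔ (c ⊓ f (fun _ => (⊤:X))) := by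
      rw [← ht', hd_idem t]
    have hexp : f (fun _ => (f (fun _ => (⊥:X)) ⊔ (c ⊓ f (fun _ => (⊤:X))))) =
        f (fun _ => f (fun _ => (⊥:X))) ⊔ (f (fun _ => c) ⊓ f (fun _ => f (fun _ => (⊤:X)))) := by
      rw [(hhom (f (fun _ => (⊥:X))) (c ⊓ f (fun _ => (⊤:X)))).2,
        (hhom c (f (fun _ => (⊤:X)))).1]
    have hcb : f (fun _ => c) ≤ f (fun _ => (⊤:X)) := hmono fun _ => le_top
    have hac : f (fun _ => (⊥:X)) ≤ f (fun _ => c) := hmono fun _ => bot_le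
    calc f (fun _ => c)
        = f (fun _ => (⊥:X)) ⊔ (f (fun _ => c) ⊓ f (fun _ => (⊤:X))) := by
          rw [inf_eq_left.mpr hcb, sup_eq_right.mpr hac]
      _ = f (fun _ => f (fun _ => (⊥:X))) ⊔ (f (fun _ => c) ⊓ f (fun _ => f (fun _ => (⊤:X)))) := by
          rw [hd_idem ⊥, hd_idem ⊤]
      _ = f (fun _ => (f (fun _ => (⊥:X)) ⊔ (c ⊓ f (fun _ => (⊤:X))))) := hexp.symm
      _ = f (fun _ => (⊥:X)) ⊔ (c ⊓ f (fun _ => (⊤:X))) := hm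
  have poly_of_med : (∀ (x : Fin n → X) (k : Fin n),
      f x = f (Function.update x k ⊥) ⊔ (f (fun _ => x k) ⊓ f (Function.update x k ⊤))) →
      IsLatticePolynomial f := by
    intro hmed
    have hg := goodstein_aux hmed Finset.univ
    refine poly_congr (g := fun x => (Finset.univ : Finset (Fin n)).powerset.sup
      (fun S => f (pat Finset.univ S (fun _ => (⊥:X))) ⊓
        S.inf (fun i => f (fun _ => (⊥:X)) ⊔ (x i ⊓ f (fun _ => (⊤:X)))))) (fun x => ?_) ?_
    · rw [hg x]
      apply Finset.sup_congr rfl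
      intro S hS
      congr 1
      · congr 1
        funext i
        simp [pat]
      · exact Finset.inf_congr rfl (fun i hi => haff (x i))
    · apply poly_finset_sup
      intro S hS
      exact IsLatticePolynomial.inf (IsLatticePolynomial.const _)
        (poly_finset_inf S _ (fun i hi => IsLatticePolynomial.sup (IsLatticePolynomial.const _)
          (IsLatticePolynomial.inf (IsLatticePolynomial.proj i) (IsLatticePolynomial.const _))))
  have i_ii : IsLatticePolynomial f → QuasiInfHomogeneous f ∧ QuasiSupHomogeneous f := by
    intro h
    obtain ⟨h1, h2, -, -, -⟩ := poly_goodP h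
    exact ⟨h1, h2⟩
  have iii_i : QuasiInfHomogeneous f → HorizSupDecomposable f → IsLatticePolynomial f :=
    fun h1 h2 => poly_of_med (med_of_qi_hs hmono h1 h2)
  have iv_i : HorizInfDecomposable f → QuasiSupHomogeneous f → IsLatticePolynomial f :=
    fun h1 h2 => poly_of_med (med_of_hi_qs hmono h1 h2)
  refine ⟨⟨fun h => i_ii h, fun h => iii_i h.1 (horizSup_of_quasi hmono h.1 h.2)⟩,
    ⟨fun h => ⟨(i_ii h).1, horizSup_of_quasi hmono (i_ii h).1 (i_ii h).2⟩,
      fun h => iii_i h.1 h.2⟩,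
    ⟨fun h => ⟨horizInf_of_quasi hmono (i_ii h).1 (i_ii h).2, (i_ii h).2⟩,
      fun h => iv_i h.1 h.2⟩⟩
end

section
/- Let f : Xⁿ → Y be a transformed polynomial function, say f = ψ ∘ p with p : Xⁿ → X a polynomial function and ψ : X → Y a unary function. Then f = δ_f ∘ p. In particular, if p is a Sugeno integral, then ψ = δ_f. -/
lemma poly_const_le {L : Type*} [DistribLattice L] [BoundedOrder L] {n : ℕ}
    {p : (Fin n → L) → L} (hp : IsLatticePolynomial p) (c : L) (x : Fin n → L) :
    p (fun _ => c) ≤ c ⊔ p x := by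
  induction hp with
  | proj i => exact le_sup_left
  | const k => exact le_sup_right
  | @inf p' q' h1 h2 ih1 ih2 =>
      show p' (fun _ => c) ⊓ q' (fun _ => c) ≤ c ⊔ (p' x ⊓ q' x)
      calc p' (fun _ => c) ⊓ q' (fun _ => c) ≤ (c ⊔ p' x) ⊓ (c ⊔ q' x) :=
            inf_le_inf ih1 ih2
        _ = c ⊔ (p' x ⊓ q' x) := (sup_inf_left c _ _).symm
  | @sup p' q' h1 h2 ih1 ih2 =>
      show p' (fun _ => c) ⊔ q' (fun _ => c) ≤ c ⊔ (p' x ⊔ q' x)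
      calc p' (fun _ => c) ⊔ q' (fun _ => c) ≤ (c ⊔ p' x) ⊔ (c ⊔ q' x) :=
            sup_le_sup ih1 ih2
        _ = c ⊔ (p' x ⊔ q' x) := by rw [sup_sup_sup_comm, sup_idem]

lemma le_poly_const {L : Type*} [DistribLattice L] [BoundedOrder L] {n : ℕ}
    {p : (Fin n → L) → L} (hp : IsLatticePolynomial p) (c : L) (x : Fin n → L) :
    c ⊓ p x ≤ p (fun _ => c) := by
  induction hp with
  | proj i => exact inf_le_left
  | const k => exact inf_le_right
  | @inf p' q' h1 h2 ih1 ih2 =>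
      show c ⊓ (p' x ⊓ q' x) ≤ p' (fun _ => c) ⊓ q' (fun _ => c)
      calc c ⊓ (p' x ⊓ q' x) = (c ⊓ p' x) ⊓ (c ⊓ q' x) := by
            rw [inf_inf_inf_comm, inf_idem]
        _ ≤ _ := inf_le_inf ih1 ih2
  | @sup p' q' h1 h2 ih1 ih2 =>
      show c ⊓ (p' x ⊔ q' x) ≤ p' (fun _ => c) ⊔ q' (fun _ => c)
      calc c ⊓ (p' x ⊔ q' x) = (c ⊓ p' x) ⊔ (c ⊓ q' x) := inf_sup_left c _ _
        _ ≤ _ := sup_le_sup ih1 ih2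

lemma poly_diag_fix {L : Type*} [DistribLattice L] [BoundedOrder L] {n : ℕ}
    {p : (Fin n → L) → L} (hp : IsLatticePolynomial p) (x : Fin n → L) :
    p (fun _ => p x) = p x := by
  refine le_antisymm ?_ ?_
  · simpa using poly_const_le hp (p x) x
  · simpa using le_poly_const hp (p x) x

theorem statement_11 {X Y : Type*} [DistribLattice X] [BoundedOrder X]
    [DistribLattice Y] [BoundedOrder Y] {n : ℕ} (hn : 0 < n)
    (p : (Fin n → X) → X) (hp : IsLatticePolynomial p) (ψ : X → Y)
    (f : (Fin n → X) → Y) (hf : f = ψ ∘ p) :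
    (∀ x : Fin n → X, f x = f (fun _ => p x)) ∧
    (Set.range p = Set.univ → ψ = fun c => f (fun _ => c)) := by
  subst hf
  constructor
  · intro x
    simp [Function.comp, poly_diag_fix hp x]
  · intro hr
    funext c
    obtain ⟨x, hx⟩ : ∃ x, p x = c := by
      have : c ∈ Set.range p := hr ▸ Set.mem_univ c
      exact this
    simp only [Function.comp_apply]
    rw [← hx, poly_diag_fix hp x]
end

section
/- A function f : Xⁿ → Y is a transformed polynomial function if and only if it is a transformed Sugeno integral. -/
section Aux
variable {L : Type*} [DistribLattice L] [BoundedOrder L] {n : ℕ}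

lemma IsLatticePolynomial.monotone {p : (Fin n → L) → L} (hp : IsLatticePolynomial p) :
    Monotone p := by
  induction hp with
  | proj i => exact fun x y h => h i
  | const c => exact monotone_const
  | inf h1 h2 ih1 ih2 => exact fun x y h => inf_le_inf (ih1 h) (ih2 h)
  | sup h1 h2 ih1 ih2 => exact fun x y h => sup_le_sup (ih1 h) (ih2 h)

def chiV (L : Type*) [DistribLattice L] [BoundedOrder L] {n : ℕ} (s : Finset (Fin n)) :
    Fin n → L := fun i => if i ∈ s then ⊤ else ⊥

lemma chiV_mono {s t : Finset (Fin n)} (h : s ⊆ t) : chiV L s ≤ chiV L t := by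
  intro i
  by_cases hi : i ∈ s
  · simp [chiV, hi, h hi]
  · simp [chiV, hi]

lemma sup_poly {ι : Type*} [DecidableEq ι] (s : Finset ι) (F : ι → (Fin n → L) → L)
    (h : ∀ i ∈ s, IsLatticePolynomial (F i)) :
    IsLatticePolynomial (fun x => s.sup (fun i => F i x)) := by
  induction s using Finset.induction_on with
  | empty => simpa using IsLatticePolynomial.const (⊥ : L)
  | @insert a s hni ih =>
      simp only [Finset.sup_insert]
      exact .sup (h _ (Finset.mem_insert_self _ _))
        (ih fun i hi => h i (Finset.mem_insert_of_mem hi))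

lemma inf_poly {ι : Type*} [DecidableEq ι] (s : Finset ι) (F : ι → (Fin n → L) → L)
    (h : ∀ i ∈ s, IsLatticePolynomial (F i)) :
    IsLatticePolynomial (fun x => s.inf (fun i => F i x)) := by
  induction s using Finset.induction_on with
  | empty => simpa using IsLatticePolynomial.const (⊤ : L)
  | @insert a s hni ih =>
      simp only [Finset.inf_insert]
      exact .inf (h _ (Finset.mem_insert_self _ _))
        (ih fun i hi => h i (Finset.mem_insert_of_mem hi))

lemma dnf {p : (Fin n → L) → L} (hp : IsLatticePolynomial p) (x : Fin n → L) :
    p x = Finset.univ.sup (fun s : Finset (Fin n) => p (chiV L s) ⊓ s.inf x) := by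
  induction hp with
  | proj i =>
      apply le_antisymm
      · refine le_trans ?_ (Finset.le_sup (Finset.mem_univ ({i} : Finset (Fin n))))
        simp [chiV]
      · refine Finset.sup_le fun s _ => ?_
        by_cases hi : i ∈ s
        · simp only [chiV, if_pos hi, top_inf_eq]
          exact Finset.inf_le hi
        · simp [chiV, hi]
  | const c =>
      apply le_antisymm
      · refine le_trans ?_ (Finset.le_sup (Finset.mem_univ (∅ : Finset (Fin n))))
        simp
      · exact Finset.sup_le fun s _ => inf_le_left
  | @inf p1 p2 h1 h2 ih1 ih2 =>
      apply le_antisymm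
      · show p1 x ⊓ p2 x ≤ _
        rw [ih1, ih2, Finset.sup_inf_distrib_right]
        refine Finset.sup_le fun s _ => ?_
        rw [Finset.sup_inf_distrib_left]
        refine Finset.sup_le fun t _ => ?_
        refine le_trans ?_ (Finset.le_sup (Finset.mem_univ (s ∪ t)))
        show (p1 (chiV L s) ⊓ s.inf x) ⊓ (p2 (chiV L t) ⊓ t.inf x) ≤
          (p1 (chiV L (s ∪ t)) ⊓ p2 (chiV L (s ∪ t))) ⊓ (s ∪ t).inf x
        calc _ ≤ (p1 (chiV L (s ∪ t)) ⊓ s.inf x) ⊓ (p2 (chiV L (s ∪ t)) ⊓ t.inf x) := by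
              exact inf_le_inf
                (inf_le_inf_right _ (h1.monotone (chiV_mono Finset.subset_union_left)))
                (inf_le_inf_right _ (h2.monotone (chiV_mono Finset.subset_union_right)))
          _ = _ := by rw [inf_inf_inf_comm, Finset.inf_union]
      · refine Finset.sup_le fun s _ => ?_
        show p1 (chiV L s) ⊓ p2 (chiV L s) ⊓ s.inf x ≤ p1 x ⊓ p2 x
        refine le_inf ?_ ?_
        · rw [ih1]
          refine le_trans ?_
            (Finset.le_sup (f := fun s : Finset (Fin n) => p1 (chiV L s) ⊓ s.inf x)
              (Finset.mem_univ s))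
          exact inf_le_inf_right _ inf_le_left
        · rw [ih2]
          refine le_trans ?_
            (Finset.le_sup (f := fun s : Finset (Fin n) => p2 (chiV L s) ⊓ s.inf x)
              (Finset.mem_univ s))
          exact inf_le_inf_right _ inf_le_right
  | @sup p1 p2 h1 h2 ih1 ih2 =>
      apply le_antisymm
      · show p1 x ⊔ p2 x ≤ _
        rw [ih1, ih2]
        apply sup_le
        · exact Finset.sup_mono_fun fun s _ => inf_le_inf_right _ le_sup_left
        · exact Finset.sup_mono_fun fun s _ => inf_le_inf_right _ le_sup_right
      · refine Finset.sup_le fun s _ => ?_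
        show (p1 (chiV L s) ⊔ p2 (chiV L s)) ⊓ s.inf x ≤ p1 x ⊔ p2 x
        rw [inf_sup_right]
        apply sup_le
        · refine le_trans ?_ le_sup_left
          rw [ih1]
          exact Finset.le_sup (f := fun s : Finset (Fin n) => p1 (chiV L s) ⊓ s.inf x)
            (Finset.mem_univ s)
        · refine le_trans ?_ le_sup_right
          rw [ih2]
          exact Finset.le_sup (f := fun s : Finset (Fin n) => p2 (chiV L s) ⊓ s.inf x)
            (Finset.mem_univ s)

end Aux

/-- `f` is a transformed polynomial function. -/
def IsTransformedPolynomial {X Y : Type*} [DistribLattice X] [BoundedOrder X]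
    [DistribLattice Y] [BoundedOrder Y] {n : ℕ} (f : (Fin n → X) → Y) : Prop :=
  ∃ (p : (Fin n → X) → X) (ψ : X → Y), IsLatticePolynomial p ∧ f = ψ ∘ p

/-- `f` is a transformed Sugeno integral. -/
def IsTransformedSugeno {X Y : Type*} [DistribLattice X] [BoundedOrder X]
    [DistribLattice Y] [BoundedOrder Y] {n : ℕ} (f : (Fin n → X) → Y) : Prop :=
  ∃ (p : (Fin n → X) → X) (ψ : X → Y),
    IsLatticePolynomial p ∧ Set.range p = Set.univ ∧ f = ψ ∘ p

theorem statement_12 {X Y : Type*} [DistribLattice X] [BoundedOrder X]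
    [DistribLattice Y] [BoundedOrder Y] {n : ℕ} (hn : 0 < n)
    (f : (Fin n → X) → Y) :
    IsTransformedPolynomial f ↔ IsTransformedSugeno f := by
  classical
  have hne : Nonempty (Fin n) := ⟨⟨0, hn⟩⟩
  constructor
  · rintro ⟨p, ψ, hp, rfl⟩
    set a : X := p (chiV X (∅ : Finset (Fin n))) with ha
    set b : X := p (chiV X (Finset.univ : Finset (Fin n))) with hb
    set N : Finset (Finset (Fin n)) :=
      Finset.univ.filter (fun s : Finset (Fin n) => s.Nonempty) with hNdef
    set q : (Fin n → X) → X :=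
      fun x => Finset.univ.inf x ⊔ N.sup (fun s => p (chiV X s) ⊓ s.inf x) with hq
    have hquniv : (Finset.univ : Finset (Fin n)) ∈ N := by
      simp [hNdef, Finset.univ_nonempty]
    -- key identity
    have key : ∀ x, (q x ⊓ b) ⊔ a = p x := by
      intro x
      set S : X := N.sup (fun s => p (chiV X s) ⊓ s.inf x) with hS
      have hSb : S ≤ b := by
        refine Finset.sup_le fun s _ => ?_
        exact le_trans inf_le_left (hp.monotone (chiV_mono (Finset.subset_univ s)))
      have hmb : Finset.univ.inf x ⊓ b ≤ S := by
        refine le_trans ?_ (Finset.le_sup hquniv)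
        rw [inf_comm]
      have hqb : q x ⊓ b = S := by
        rw [hq]
        simp only []
        rw [inf_sup_right, inf_eq_left.mpr hSb, sup_eq_right.mpr hmb]
      have hpx : p x = a ⊔ S := by
        rw [dnf hp x]
        apply le_antisymm
        · refine Finset.sup_le fun s _ => ?_
          by_cases hs : s = ∅
          · subst hs
            simp [ha]
          · refine le_trans (Finset.le_sup (f := fun s : Finset (Fin n) =>
              p (chiV X s) ⊓ s.inf x) ?_) le_sup_right
            simp [hNdef, Finset.nonempty_iff_ne_empty, hs]
        · apply sup_le
          · refine le_trans ?_ (Finset.le_sup (f := fun s : Finset (Fin n) =>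
              p (chiV X s) ⊓ s.inf x) (Finset.mem_univ ∅))
            simp [ha]
          · refine Finset.sup_le fun s hs => ?_
            exact Finset.le_sup (f := fun s : Finset (Fin n) => p (chiV X s) ⊓ s.inf x)
              (Finset.mem_univ s)
      rw [hqb, hpx, sup_comm]
    refine ⟨q, fun y => ψ ((y ⊓ b) ⊔ a), ?_, ?_, ?_⟩
    · refine .sup (inf_poly Finset.univ (fun i => fun x => x i)
        (fun i _ => .proj i)) (sup_poly N _ (fun s _ => ?_))
      exact .inf (.const _) (inf_poly s (fun i => fun x => x i) (fun i _ => .proj i))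
    · refine Set.eq_univ_iff_forall.mpr fun y => ⟨fun _ => y, ?_⟩
      rw [hq]
      simp only []
      rw [Finset.inf_const Finset.univ_nonempty]
      refine sup_eq_left.mpr (Finset.sup_le fun s hs => ?_)
      have hsne : s.Nonempty := by simpa [hNdef] using hs
      rw [Finset.inf_const hsne]
      exact inf_le_right
    · funext x
      simp only [Function.comp_apply]
      rw [key x]
  · rintro ⟨p, ψ, hp, -, rfl⟩
    exact ⟨p, ψ, hp, rfl⟩
end

section
/- (Goodstein) Every polynomial function p : Xⁿ → X is completely determined by its restriction to {0,1}ⁿ: if two polynomial functions agree on all tuples with components in {0,1}, then they are equal. Moreover, a function g : {0,1}ⁿ → X can be extended to a polynomial function f : Xⁿ → X if and only if g is order-preserving, and in this case the extension is unique. -/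
/-- The canonical inclusion of `{0,1}` into a bounded lattice. -/
def boolToLattice {X : Type*} [Lattice X] [BoundedOrder X] (b : Bool) : X :=
  if b then ⊤ else ⊥

section Aux

variable {X : Type*} [DistribLattice X] [BoundedOrder X] {n : ℕ}

lemma boolToLattice_mono {b b' : Bool} (h : b ≤ b') :
    (boolToLattice b : X) ≤ boolToLattice b' := by
  cases b <;> cases b' <;> simp_all [boolToLattice, Bool.le_iff_imp]

lemma poly_monotone {p : (Fin n → X) → X} (hp : IsLatticePolynomial p) : Monotone p := by
  induction hp with
  | proj i => exact fun x y h => h i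
  | const c => exact monotone_const
  | inf hp hq ihp ihq => exact fun x y h => inf_le_inf (ihp h) (ihq h)
  | sup hp hq ihp ihq => exact fun x y h => sup_le_sup (ihp h) (ihq h)

/-- The meet of the variables indexed by the support of `e`. -/
def latTerm (e : Fin n → Bool) (x : Fin n → X) : X :=
  Finset.univ.inf (fun i => if e i then x i else ⊤)

lemma latTerm_inf_le (e f : Fin n → Bool) (x : Fin n → X) :
    latTerm e x ⊓ latTerm f x ≤ latTerm (fun i => e i || f i) x := by
  refine Finset.le_inf fun i _ => ?_
  cases he : e i with
  | true =>
      exact le_trans inf_le_left (le_trans (Finset.inf_le (Finset.mem_univ i)) (by simp [he]))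
  | false =>
      cases hf : f i with
      | true =>
          exact le_trans inf_le_right
            (le_trans (Finset.inf_le (Finset.mem_univ i)) (by simp [hf]))
      | false => simp [he, hf]

lemma latTerm_poly (e : Fin n → Bool) : IsLatticePolynomial (latTerm (X := X) e) := by
  unfold latTerm
  classical
  induction (Finset.univ : Finset (Fin n)) using Finset.induction with
  | empty => simpa using IsLatticePolynomial.const ⊤
  | @insert a s ha ih =>
      simp only [Finset.inf_insert]
      refine IsLatticePolynomial.inf ?_ ih
      cases h : e a with
      | true => simpa [h] using IsLatticePolynomial.proj (L := X) a
      | false => simpa [h] using IsLatticePolynomial.const (n := n) (⊤ : X)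

lemma poly_finsetSup {α : Type*} (s : Finset α) (F : α → (Fin n → X) → X)
    (h : ∀ a ∈ s, IsLatticePolynomial (F a)) :
    IsLatticePolynomial (fun x => s.sup (fun a => F a x)) := by
  classical
  induction s using Finset.induction with
  | empty => simpa using IsLatticePolynomial.const (n := n) (⊥ : X)
  | @insert a s ha ih =>
      simp only [Finset.sup_insert]
      exact IsLatticePolynomial.sup (h a (Finset.mem_insert_self a s))
        (ih fun b hb => h b (Finset.mem_insert_of_mem hb))

/-- Disjunctive normal form of a lattice polynomial. -/
lemma polyNF {p : (Fin n → X) → X} (hp : IsLatticePolynomial p) (x : Fin n → X) :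
    p x = Finset.univ.sup
      (fun e : Fin n → Bool => p (fun i => boolToLattice (e i)) ⊓ latTerm e x) := by
  classical
  induction hp with
  | proj i =>
      refine le_antisymm ?_ (Finset.sup_le fun e _ => ?_)
      · refine le_trans ?_ (Finset.le_sup (f := fun e : Fin n → Bool =>
          boolToLattice (e i) ⊓ latTerm e x) (Finset.mem_univ (fun j => decide (j = i))))
        refine le_inf (by simp [boolToLattice]) (Finset.le_inf fun j _ => ?_)
        by_cases h : j = i <;> simp [h]
      · cases h : e i with
        | false => simp [boolToLattice, h]
        | true =>
            exact le_trans inf_le_right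
              (le_trans (Finset.inf_le (Finset.mem_univ i)) (by simp [h]))
  | const c =>
      refine le_antisymm ?_ (Finset.sup_le fun e _ => inf_le_left)
      refine le_trans ?_ (Finset.le_sup (f := fun e : Fin n → Bool =>
        c ⊓ latTerm e x) (Finset.mem_univ (fun _ => false)))
      exact le_inf le_rfl (Finset.le_inf fun i _ => by simp)
  | @inf p q hp hq ihp ihq =>
      show p x ⊓ q x = Finset.univ.sup
        (fun e : Fin n → Bool =>
          (p (fun i => boolToLattice (e i)) ⊓ q (fun i => boolToLattice (e i))) ⊓ latTerm e x)
      refine le_antisymm ?_ (Finset.sup_le fun e _ => ?_)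
      · rw [ihp, ihq, Finset.sup_inf_sup]
        refine Finset.sup_le fun ef _ => ?_
        obtain ⟨e, f⟩ := ef
        refine le_trans ?_ (Finset.le_sup (f := fun g : Fin n → Bool =>
          (p (fun i => boolToLattice (g i)) ⊓ q (fun i => boolToLattice (g i))) ⊓ latTerm g x)
          (Finset.mem_univ (fun i => e i || f i)))
        have hle : ∀ (h : Fin n → Bool), (∀ i, h i ≤ (e i || f i)) →
            (fun i => boolToLattice (h i) : Fin n → X) ≤
              (fun i => boolToLattice ((fun j => e j || f j) i)) :=
          fun h hh i => boolToLattice_mono (hh i)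
        have h1 : p (fun i => boolToLattice (e i)) ≤
            p (fun i => boolToLattice (e i || f i)) :=
          poly_monotone hp (hle e (fun i => by cases e i <;> simp))
        have h2 : q (fun i => boolToLattice (f i)) ≤
            q (fun i => boolToLattice (e i || f i)) :=
          poly_monotone hq (hle f (fun i => by cases f i <;> simp))
        calc (p (fun i => boolToLattice (e i)) ⊓ latTerm e x) ⊓
              (q (fun i => boolToLattice (f i)) ⊓ latTerm f x)
            ≤ (p (fun i => boolToLattice (e i)) ⊓ q (fun i => boolToLattice (f i))) ⊓
              (latTerm e x ⊓ latTerm f x) := by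
              refine le_inf (le_inf ?_ ?_) (le_inf ?_ ?_)
              · exact le_trans inf_le_left inf_le_left
              · exact le_trans inf_le_right inf_le_left
              · exact le_trans inf_le_left inf_le_right
              · exact le_trans inf_le_right inf_le_right
          _ ≤ _ := inf_le_inf (inf_le_inf h1 h2) (latTerm_inf_le e f x)
      · refine le_inf ?_ ?_
        · rw [ihp]
          exact le_trans (inf_le_inf inf_le_left le_rfl)
            (Finset.le_sup (f := fun e : Fin n → Bool =>
              p (fun i => boolToLattice (e i)) ⊓ latTerm e x) (Finset.mem_univ e))
        · rw [ihq]
          exact le_trans (inf_le_inf inf_le_right le_rfl)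
            (Finset.le_sup (f := fun e : Fin n → Bool =>
              q (fun i => boolToLattice (e i)) ⊓ latTerm e x) (Finset.mem_univ e))
  | @sup p q hp hq ihp ihq =>
      show p x ⊔ q x = Finset.univ.sup
        (fun e : Fin n → Bool =>
          (p (fun i => boolToLattice (e i)) ⊔ q (fun i => boolToLattice (e i))) ⊓ latTerm e x)
      refine le_antisymm ?_ (Finset.sup_le fun e _ => ?_)
      · rw [ihp, ihq]
        refine sup_le (Finset.sup_le fun e _ => ?_) (Finset.sup_le fun e _ => ?_)
        · exact le_trans (inf_le_inf le_sup_left le_rfl)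
            (Finset.le_sup (f := fun e : Fin n → Bool =>
              (p (fun i => boolToLattice (e i)) ⊔ q (fun i => boolToLattice (e i))) ⊓ latTerm e x)
              (Finset.mem_univ e))
        · exact le_trans (inf_le_inf le_sup_right le_rfl)
            (Finset.le_sup (f := fun e : Fin n → Bool =>
              (p (fun i => boolToLattice (e i)) ⊔ q (fun i => boolToLattice (e i))) ⊓ latTerm e x)
              (Finset.mem_univ e))
      · rw [inf_sup_right, ihp, ihq]
        exact sup_le_sup
          (Finset.le_sup (f := fun e : Fin n → Bool =>
            p (fun i => boolToLattice (e i)) ⊓ latTerm e x) (Finset.mem_univ e))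
          (Finset.le_sup (f := fun e : Fin n → Bool =>
            q (fun i => boolToLattice (e i)) ⊓ latTerm e x) (Finset.mem_univ e))

lemma latTerm_cube_of_le {e e' : Fin n → Bool} (h : e ≤ e') :
    latTerm e (fun i => (boolToLattice (e' i) : X)) = ⊤ := by
  refine le_antisymm le_top (Finset.le_inf fun i _ => ?_)
  cases hi : e i with
  | false => simp [hi]
  | true =>
      have hi' : e' i = true := by
        have := h i
        rw [hi, Bool.le_iff_imp] at this
        exact this rfl
      simp [hi, hi', boolToLattice]

lemma latTerm_cube_of_not_le {e e' : Fin n → Bool} (h : ¬ e ≤ e') :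
    latTerm e (fun i => (boolToLattice (e' i) : X)) = ⊥ := by
  have : ∃ i, ¬ e i ≤ e' i := by
    by_contra hc
    push_neg at hc
    exact h (fun i => hc i)
  obtain ⟨i, hi⟩ := this
  have he : e i = true := by
    cases h' : e i with
    | false => exact absurd (by simp [h', Bool.le_iff_imp]) hi
    | true => rfl
  have he' : e' i = false := by
    cases h' : e' i with
    | false => rfl
    | true => exact absurd (by simp [h', Bool.le_iff_imp]) hi
  refine le_antisymm ?_ bot_le
  exact le_trans (Finset.inf_le (Finset.mem_univ i)) (by simp [he, he', boolToLattice])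

end Aux

theorem statement_16 {X : Type*} [DistribLattice X] [BoundedOrder X] {n : ℕ} (hn : 0 < n) :
    -- a polynomial function is completely determined by its restriction to `{0,1}ⁿ`
    (∀ p q : (Fin n → X) → X, IsLatticePolynomial p → IsLatticePolynomial q →
      (∀ e : Fin n → Bool, p (fun i => boolToLattice (e i)) = q (fun i => boolToLattice (e i))) →
      p = q) ∧
    -- a function on `{0,1}ⁿ` extends to a polynomial function iff it is order-preserving,
    -- and then the extension is unique
    (∀ g : (Fin n → Bool) → X,
      ((∃ f : (Fin n → X) → X, IsLatticePolynomial f ∧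
          ∀ e : Fin n → Bool, f (fun i => boolToLattice (e i)) = g e) ↔ Monotone g) ∧
      (∀ f₁ f₂ : (Fin n → X) → X, IsLatticePolynomial f₁ → IsLatticePolynomial f₂ →
        (∀ e : Fin n → Bool, f₁ (fun i => boolToLattice (e i)) = g e) →
        (∀ e : Fin n → Bool, f₂ (fun i => boolToLattice (e i)) = g e) →
        f₁ = f₂)) := by
  classical
  have determined : ∀ p q : (Fin n → X) → X, IsLatticePolynomial p → IsLatticePolynomial q →
      (∀ e : Fin n → Bool, p (fun i => boolToLattice (e i)) = q (fun i => boolToLattice (e i))) →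
      p = q := by
    intro p q hp hq hagree
    funext x
    rw [polyNF hp, polyNF hq]
    exact Finset.sup_congr rfl fun e _ => by rw [hagree e]
  refine ⟨determined, fun g => ⟨⟨?_, ?_⟩, ?_⟩⟩
  · rintro ⟨f, hf, hfg⟩ e e' hee'
    rw [← hfg e, ← hfg e']
    exact poly_monotone hf (fun i => boolToLattice_mono (hee' i))
  · intro hg
    refine ⟨fun x => Finset.univ.sup (fun e : Fin n → Bool => g e ⊓ latTerm e x), ?_, ?_⟩
    · exact poly_finsetSup _ _ fun e _ =>
        IsLatticePolynomial.inf (IsLatticePolynomial.const (g e)) (latTerm_poly e)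
    · intro e'
      show Finset.univ.sup
        (fun e : Fin n → Bool => g e ⊓ latTerm e (fun i => boolToLattice (e' i))) = g e'
      refine le_antisymm (Finset.sup_le fun e _ => ?_) ?_
      · by_cases h : e ≤ e'
        · rw [latTerm_cube_of_le h]
          simpa using hg h
        · rw [latTerm_cube_of_not_le h]
          simp
      · refine le_trans ?_ (Finset.le_sup (f := fun e : Fin n → Bool =>
          g e ⊓ latTerm e (fun i => boolToLattice (e' i))) (Finset.mem_univ e'))
        show g e' ≤ g e' ⊓ latTerm e' (fun i => boolToLattice (e' i))
        rw [latTerm_cube_of_le le_rfl]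
        simp
  · intro f₁ f₂ hf₁ hf₂ h₁ h₂
    exact determined f₁ f₂ hf₁ hf₂ fun e => by rw [h₁ e, h₂ e]
end

section
/- For a function f : Xⁿ → X, the following are equivalent: (i) f is a polynomial function; (ii) f is median decomposable, i.e., f(x) = med(f(x_k^0), x_k, f(x_k^1)) for all x ∈ Xⁿ and all k ∈ {1,…,n}; (iii) f is order-preserving and satisfies f(x₁∧c,…,xₙ∧c) = f(x) ∧ c and f(x₁∨c,…,xₙ∨c) = f(x) ∨ c for all x ∈ Xⁿ and all c in the convex hull of the range of f. -/
/-- The ternary median in a lattice. -/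
def med {L : Type*} [Lattice L] (a b c : L) : L := (a ⊓ b) ⊔ (b ⊓ c) ⊔ (c ⊓ a)

/-- The convex hull of `S`: the smallest convex subset containing `S`. -/
def latticeConvexHull {X : Type*} [Lattice X] (S : Set X) : Set X :=
  ⋂₀ {T : Set X | S ⊆ T ∧ IsConvexSet T}

section Aux

variable {X : Type*} [DistribLattice X] [BoundedOrder X] {n : ℕ}

lemma med_eq_of_le {a b : X} (h : a ≤ b) (x : X) : med a x b = a ⊔ (x ⊓ b) := by
  unfold med
  apply le_antisymm
  · refine sup_le (sup_le ?_ ?_) ?_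
    · exact inf_le_left.trans le_sup_left
    · exact le_sup_right
    · exact inf_le_right.trans le_sup_left
  · exact sup_le (le_sup_of_le_right (le_inf h le_rfl)) (le_sup_of_le_left le_sup_right)

lemma med_eq_of_le' {a b : X} (h : a ≤ b) (x : X) : med a x b = (a ⊔ x) ⊓ b := by
  rw [med_eq_of_le h, sup_inf_left, sup_eq_right.mpr h]

lemma IsLatticePolynomial.monotone_s18 {f : (Fin n → X) → X} (hf : IsLatticePolynomial f) :
    Monotone f := by
  induction hf with
  | proj i => exact fun x y h => h i
  | const c => exact monotone_const
  | inf hp hq ihp ihq => exact fun x y h => inf_le_inf (ihp h) (ihq h)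
  | sup hp hq ihp ihq => exact fun x y h => sup_le_sup (ihp h) (ihq h)

lemma update_bot_le (x : Fin n → X) (k : Fin n) : Function.update x k ⊥ ≤ x := by
  intro i
  by_cases h : i = k
  · subst h; simp
  · simp [Function.update_of_ne h]

lemma le_update_top (x : Fin n → X) (k : Fin n) : x ≤ Function.update x k ⊤ := by
  intro i
  by_cases h : i = k
  · subst h; simp
  · simp [Function.update_of_ne h]

lemma update_bot_le_update_top (x : Fin n → X) (k : Fin n) :
    Function.update x k ⊥ ≤ Function.update x k ⊤ :=
  (update_bot_le x k).trans (le_update_top x k)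

/-- (i) → (ii) -/
lemma decomp_of_poly {f : (Fin n → X) → X} (hf : IsLatticePolynomial f) :
    ∀ (x : Fin n → X) (k : Fin n),
      f x = med (f (Function.update x k ⊥)) (x k) (f (Function.update x k ⊤)) := by
  induction hf with
  | proj i =>
    intro x k
    rcases eq_or_ne i k with rfl | h
    · simp [med]
    · simp only [Function.update_of_ne h, med]
      rw [inf_idem]
      exact (sup_eq_right.mpr (sup_le inf_le_left inf_le_right)).symm
  | const c =>
    intro x k
    simp only [med]
    rw [inf_idem]
    exact (sup_eq_right.mpr (sup_le inf_le_left inf_le_right)).symm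
  | inf hp hq ihp ihq =>
    intro x k
    have hP := hp.monotone_s18 (update_bot_le_update_top x k)
    have hQ := hq.monotone_s18 (update_bot_le_update_top x k)
    dsimp only
    rw [ihp x k, ihq x k, med_eq_of_le' hP, med_eq_of_le' hQ,
      med_eq_of_le' (inf_le_inf hP hQ), sup_inf_right]
    ac_rfl
  | sup hp hq ihp ihq =>
    intro x k
    have hP := hp.monotone_s18 (update_bot_le_update_top x k)
    have hQ := hq.monotone_s18 (update_bot_le_update_top x k)
    dsimp only
    rw [ihp x k, ihq x k, med_eq_of_le hP, med_eq_of_le hQ,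
      med_eq_of_le (sup_le_sup hP hQ), inf_sup_left]
    ac_rfl

lemma IsLatticePolynomial.med_comp {p q r : (Fin n → X) → X} (hp : IsLatticePolynomial p)
    (hq : IsLatticePolynomial q) (hr : IsLatticePolynomial r) :
    IsLatticePolynomial (fun x => med (p x) (q x) (r x)) := by
  simp only [med]
  exact .sup (.sup (.inf hp hq) (.inf hq hr)) (.inf hr hp)

/-- (ii) → (i) -/
lemma poly_of_decomp {f : (Fin n → X) → X}
    (hf : ∀ (x : Fin n → X) (k : Fin n),
      f x = med (f (Function.update x k ⊥)) (x k) (f (Function.update x k ⊤))) :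
    IsLatticePolynomial f := by
  have key : ∀ S : Finset (Fin n), ∀ a : Fin n → X,
      IsLatticePolynomial (fun x => f (fun i => if i ∈ S then x i else a i)) := by
    intro S
    induction S using Finset.induction_on with
    | empty => intro a; simpa using IsLatticePolynomial.const (f a)
    | insert _ _ hk =>
      rename_i k S ih
      intro a
      have hrw : ∀ x : Fin n → X,
          f (fun i => if i ∈ insert k S then x i else a i) =
            med (f (fun i => if i ∈ S then x i else Function.update a k ⊥ i)) (x k)
              (f (fun i => if i ∈ S then x i else Function.update a k ⊤ i)) := by
        intro x
        have h1 := hf (fun i => if i ∈ insert k S then x i else a i) k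
        have e0 : Function.update (fun i => if i ∈ insert k S then x i else a i) k ⊥ =
            fun i => if i ∈ S then x i else Function.update a k ⊥ i := by
          funext i
          by_cases h : i = k
          · subst h; simp [hk]
          · simp [Function.update_of_ne h, Finset.mem_insert, h]
        have e1 : Function.update (fun i => if i ∈ insert k S then x i else a i) k ⊤ =
            fun i => if i ∈ S then x i else Function.update a k ⊤ i := by
          funext i
          by_cases h : i = k
          · subst h; simp [hk]
          · simp [Function.update_of_ne h, Finset.mem_insert, h]
        rw [e0, e1] at h1
        simpa using h1
      simp only [hrw]
      exact IsLatticePolynomial.med_comp (ih _) (.proj k) (ih _)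
  have := key Finset.univ (fun _ => ⊥)
  simpa using this

/-- The basic homogeneity identity satisfied by every polynomial. -/
lemma poly_inf_hom {f : (Fin n → X) → X} (hf : IsLatticePolynomial f) (x : Fin n → X) (c : X) :
    f (fun i => x i ⊓ c) ⊓ c = f x ⊓ c := by
  induction hf with
  | proj i => simp [inf_assoc]
  | const d => rfl
  | inf hp hq ihp ihq =>
    simp only
    rw [inf_inf_distrib_right, ihp, ihq, ← inf_inf_distrib_right]
  | sup hp hq ihp ihq =>
    simp only
    rw [inf_sup_right, ihp, ihq, ← inf_sup_right]

lemma poly_sup_hom {f : (Fin n → X) → X} (hf : IsLatticePolynomial f) (x : Fin n → X) (c : X) :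
    f (fun i => x i ⊔ c) ⊔ c = f x ⊔ c := by
  induction hf with
  | proj i => simp [sup_assoc]
  | const d => rfl
  | sup hp hq ihp ihq =>
    simp only
    rw [sup_sup_distrib_right, ihp, ihq, ← sup_sup_distrib_right]
  | inf hp hq ihp ihq =>
    simp only
    rw [sup_inf_right, ihp, ihq, ← sup_inf_right]

lemma subset_latticeConvexHull (S : Set X) : S ⊆ latticeConvexHull S :=
  fun s hs => Set.mem_sInter.mpr fun _ hT => hT.1 hs

lemma latticeConvexHull_convex (S : Set X) : IsConvexSet (latticeConvexHull S) := by
  intro a ha b hb c hac hcb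
  refine Set.mem_sInter.mpr fun T hT =>
    hT.2 a (Set.mem_sInter.mp ha T hT) b (Set.mem_sInter.mp hb T hT) c hac hcb

lemma hull_range_subset_Icc {f : (Fin n → X) → X} (hm : Monotone f) :
    latticeConvexHull (Set.range f) ⊆ Set.Icc (f (fun _ => ⊥)) (f (fun _ => ⊤)) := by
  intro c hc
  refine Set.mem_sInter.mp hc _ ⟨?_, ?_⟩
  · rintro _ ⟨x, rfl⟩
    exact ⟨hm fun i => bot_le, hm fun i => le_top⟩
  · intro a ha b hb c hac hcb
    exact ⟨ha.1.trans hac, hcb.trans hb.2⟩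

/-- (i) → (iii), the homogeneity part. -/
lemma poly_homog {f : (Fin n → X) → X} (hf : IsLatticePolynomial f) (c : X)
    (hc : c ∈ latticeConvexHull (Set.range f)) (x : Fin n → X) :
    f (fun i => x i ⊓ c) = f x ⊓ c ∧ f (fun i => x i ⊔ c) = f x ⊔ c := by
  obtain ⟨hbot, htop⟩ := hull_range_subset_Icc hf.monotone_s18 hc
  have hcbar : f (fun _ => c) = c := by
    apply le_antisymm
    · have h := poly_sup_hom hf (fun _ => ⊥) c
      rw [show (fun i => (fun _ : Fin n => (⊥ : X)) i ⊔ c) = (fun _ => c) from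
        funext fun i => bot_sup_eq c] at h
      calc f (fun _ => c) ≤ f (fun _ => c) ⊔ c := le_sup_left
        _ = f (fun _ => ⊥) ⊔ c := h
        _ = c := sup_eq_right.mpr hbot
    · have h := poly_inf_hom hf (fun _ => ⊤) c
      rw [show (fun i => (fun _ : Fin n => (⊤ : X)) i ⊓ c) = (fun _ => c) from
        funext fun i => top_inf_eq c] at h
      calc c = f (fun _ => ⊤) ⊓ c := (inf_eq_right.mpr htop).symm
        _ = f (fun _ => c) ⊓ c := h.symm
        _ ≤ f (fun _ => c) := inf_le_left
  constructor
  · apply le_antisymm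
    · refine le_inf (hf.monotone_s18 fun i => inf_le_left) ?_
      have h := poly_sup_hom hf (fun i => x i ⊓ c) c
      rw [show (fun i => (x i ⊓ c) ⊔ c) = (fun _ => c) from
        funext fun i => sup_eq_right.mpr inf_le_right, hcbar, sup_idem] at h
      calc f (fun i => x i ⊓ c) ≤ f (fun i => x i ⊓ c) ⊔ c := le_sup_left
        _ = c := h.symm
    · calc f x ⊓ c = f (fun i => x i ⊓ c) ⊓ c := (poly_inf_hom hf x c).symm
        _ ≤ f (fun i => x i ⊓ c) := inf_le_left
  · apply le_antisymm
    · calc f (fun i => x i ⊔ c) ≤ f (fun i => x i ⊔ c) ⊔ c := le_sup_left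
        _ = f x ⊔ c := poly_sup_hom hf x c
    · refine sup_le (hf.monotone_s18 fun i => le_sup_left) ?_
      have h := poly_inf_hom hf (fun i => x i ⊔ c) c
      rw [show (fun i => (x i ⊔ c) ⊓ c) = (fun _ => c) from
        funext fun i => inf_eq_right.mpr le_sup_right, hcbar, inf_idem] at h
      calc c = f (fun i => x i ⊔ c) ⊓ c := h
        _ ≤ f (fun i => x i ⊔ c) := inf_le_left

/-- (iii) → (ii). -/
lemma decomp_of_three {f : (Fin n → X) → X} (hm : Monotone f)
    (hh : ∀ c ∈ latticeConvexHull (Set.range f), ∀ x : Fin n → X,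
      f (fun i => x i ⊓ c) = f x ⊓ c ∧ f (fun i => x i ⊔ c) = f x ⊔ c) :
    ∀ (x : Fin n → X) (k : Fin n),
      f x = med (f (Function.update x k ⊥)) (x k) (f (Function.update x k ⊤)) := by
  intro x k
  set a := f (Function.update x k ⊥) with ha
  set b := f (Function.update x k ⊤) with hb
  have hab : a ≤ b := hm (update_bot_le_update_top x k)
  set c := f x with hc
  have hcmem : c ∈ latticeConvexHull (Set.range f) :=
    subset_latticeConvexHull _ ⟨x, rfl⟩
  have hbotmem : f (fun _ => ⊥) ∈ latticeConvexHull (Set.range f) :=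
    subset_latticeConvexHull _ ⟨_, rfl⟩
  have htopmem : f (fun _ => ⊤) ∈ latticeConvexHull (Set.range f) :=
    subset_latticeConvexHull _ ⟨_, rfl⟩
  have hbc : f (fun _ => ⊥) ≤ c := hm fun i => bot_le
  have hct : c ≤ f (fun _ => ⊤) := hm fun i => le_top
  have hac : a ≤ c := hm (update_bot_le x k)
  have hcb : c ≤ b := hm (le_update_top x k)
  rw [med_eq_of_le hab]
  apply le_antisymm
  · -- f x ≤ a ⊔ (x k ⊓ b)
    set d := f (fun _ => ⊥) ⊔ (x k ⊓ c) with hd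
    have hdmem : d ∈ latticeConvexHull (Set.range f) :=
      latticeConvexHull_convex _ _ hbotmem _ hcmem d le_sup_left
        (sup_le hbc inf_le_right)
    have h1 : f (fun i => x i ⊓ c) = f x ⊓ c := (hh c hcmem x).1
    have h2 : f (fun i => Function.update x k ⊥ i ⊔ d) = a ⊔ d :=
      (hh d hdmem (Function.update x k ⊥)).2
    have hle : (fun i => x i ⊓ c) ≤ (fun i => Function.update x k ⊥ i ⊔ d) := by
      intro i
      by_cases h : i = k
      · subst h
        simp only [Function.update_self]
        exact le_sup_of_le_right (le_sup_of_le_right le_rfl)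
      · simp only [Function.update_of_ne h]
        exact inf_le_left.trans le_sup_left
    calc f x = f x ⊓ c := (inf_idem _).symm
      _ = f (fun i => x i ⊓ c) := h1.symm
      _ ≤ f (fun i => Function.update x k ⊥ i ⊔ d) := hm hle
      _ = a ⊔ d := h2
      _ ≤ a ⊔ (x k ⊓ b) := by
          refine sup_le le_sup_left (sup_le ?_ ?_)
          · exact le_sup_of_le_left (hm fun i => bot_le)
          · exact le_sup_of_le_right (inf_le_inf le_rfl hcb)
  · -- a ⊔ (x k ⊓ b) ≤ f x
    refine sup_le hac ?_
    set e := f (fun _ => ⊤) ⊓ (x k ⊔ c) with he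
    have hemem : e ∈ latticeConvexHull (Set.range f) :=
      latticeConvexHull_convex _ _ hcmem _ htopmem e (le_inf hct le_sup_right)
        inf_le_left
    have h1 : f (fun i => x i ⊔ c) = f x ⊔ c := (hh c hcmem x).2
    have h2 : f (fun i => Function.update x k ⊤ i ⊓ e) = b ⊓ e :=
      (hh e hemem (Function.update x k ⊤)).1
    have hle : (fun i => Function.update x k ⊤ i ⊓ e) ≤ (fun i => x i ⊔ c) := by
      intro i
      by_cases h : i = k
      · subst h
        simp only [Function.update_self]
        exact inf_le_right.trans (inf_le_right)
      · simp only [Function.update_of_ne h]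
        exact le_sup_of_le_left inf_le_left
    have : b ⊓ e ≤ f x := by
      calc b ⊓ e = f (fun i => Function.update x k ⊤ i ⊓ e) := h2.symm
        _ ≤ f (fun i => x i ⊔ c) := hm hle
        _ = f x ⊔ c := h1
        _ = f x := sup_idem _
    refine le_trans ?_ this
    exact le_inf inf_le_right
      (le_inf (inf_le_right.trans (hm fun i => le_top)) (inf_le_left.trans le_sup_left))

end Aux

theorem statement_18 {X : Type*} [DistribLattice X] [BoundedOrder X] {n : ℕ} (hn : 0 < n)
    (f : (Fin n → X) → X) :
    -- (i) ↔ (ii): median decomposability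
    (IsLatticePolynomial f ↔
      ∀ (x : Fin n → X) (k : Fin n),
        f x = med (f (Function.update x k ⊥)) (x k) (f (Function.update x k ⊤))) ∧
    -- (i) ↔ (iii): order-preservation together with ∧- and ∨-homogeneity over the
    -- convex hull of the range
    (IsLatticePolynomial f ↔
      (Monotone f ∧
       ∀ c ∈ latticeConvexHull (Set.range f), ∀ x : Fin n → X,
         f (fun i => x i ⊓ c) = f x ⊓ c ∧ f (fun i => x i ⊔ c) = f x ⊔ c)) := by
  constructor
  · exact ⟨decomp_of_poly, poly_of_decomp⟩
  · constructor
    · exact fun hf => ⟨hf.monotone_s18, fun c hc x => poly_homog hf c hc x⟩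
    · rintro ⟨hm, hh⟩
      exact poly_of_decomp (decomp_of_three hm hh)
end
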